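/- Let Ω, u, v : R^3 → R^3 be smooth vector fields forming at each point a direct orthonormal frame (Ω·u = 0, v = Ω × u, all unit length). Then δ := [(Ω·∇)u]·v + [(u·∇)v]·Ω + [(v·∇)Ω]·u equals −([(u·∇)Ω]·v + [(v·∇)u]·Ω + [(Ω·∇)v]·u). -/

import Mathlib

open Matrix Real

noncomputable section

/-- Partial derivative `∂ⱼ f` of a scalar field on `ℝ³`. -/
def pd (j : Fin 3) (f : (Fin 3 → ℝ) → ℝ) (x : Fin 3 → ℝ) : ℝ :=
  fderiv ℝ f x (Pi.single j 1)

/-- The directional derivative `(B·∇)C` of a vector field `C` along `B`. -/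
def dirDeriv (B C : (Fin 3 → ℝ) → Fin 3 → ℝ) (x : Fin 3 → ℝ) : Fin 3 → ℝ :=
  fun i => ∑ j, B x j * pd j (fun y => C y i) x

/-- The cross product of two vectors in `ℝ³`. -/
def crossVec (a b : Fin 3 → ℝ) : Fin 3 → ℝ :=
  ![a 1 * b 2 - a 2 * b 1, a 2 * b 0 - a 0 * b 2, a 0 * b 1 - a 1 * b 0]

lemma pd_dot_zero (C D : (Fin 3 → ℝ) → Fin 3 → ℝ)
    (hC : ContDiff ℝ (⊤ : ℕ∞) C) (hD : ContDiff ℝ (⊤ : ℕ∞) D)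
    (h : ∀ y, ∑ i, C y i * D y i = 0) (j : Fin 3) (x : Fin 3 → ℝ) :
    ∑ i, (pd j (fun y => C y i) x * D x i + C x i * pd j (fun y => D y i) x) = 0 := by
  have hCi : ∀ i, DifferentiableAt ℝ (fun y => C y i) x := fun i =>
    (differentiable_pi.mp (hC.differentiable (by simp)) i) x
  have hDi : ∀ i, DifferentiableAt ℝ (fun y => D y i) x := fun i =>
    (differentiable_pi.mp (hD.differentiable (by simp)) i) x
  have hsum : HasFDerivAt (fun y => ∑ i, C y i * D y i)
      (∑ i : Fin 3, (C x i • fderiv ℝ (fun y => D y i) x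
        + D x i • fderiv ℝ (fun y => C y i) x)) x := by
    apply HasFDerivAt.fun_sum
    intro i _
    exact (hCi i).hasFDerivAt.mul (hDi i).hasFDerivAt
  have h0 : HasFDerivAt (fun y => ∑ i, C y i * D y i)
      (0 : (Fin 3 → ℝ) →L[ℝ] ℝ) x := by
    have : (fun y => ∑ i, C y i * D y i) = fun _ => (0 : ℝ) := funext h
    rw [this]
    exact hasFDerivAt_const 0 x
  have heq := hsum.unique h0
  have := congrArg (fun L : (Fin 3 → ℝ) →L[ℝ] ℝ => L (Pi.single j 1)) heq
  simp only [ContinuousLinearMap.sum_apply, ContinuousLinearMap.add_apply,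
    ContinuousLinearMap.smul_apply, ContinuousLinearMap.zero_apply, smul_eq_mul] at this
  rw [← this]
  apply Finset.sum_congr rfl
  intro i _
  simp [pd]
  ring

lemma pair_zero (B C D : (Fin 3 → ℝ) → Fin 3 → ℝ)
    (hC : ContDiff ℝ (⊤ : ℕ∞) C) (hD : ContDiff ℝ (⊤ : ℕ∞) D)
    (h : ∀ y, ∑ i, C y i * D y i = 0) (x : Fin 3 → ℝ) :
    (∑ i, dirDeriv B C x i * D x i) + (∑ i, dirDeriv B D x i * C x i) = 0 := by
  simp only [dirDeriv, Finset.sum_mul]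
  simp only [← Finset.sum_add_distrib]
  rw [Finset.sum_comm]
  have : ∀ j ∈ Finset.univ, (∑ i : Fin 3, ((B x j * pd j (fun y => C y i) x) * D x i
      + (B x j * pd j (fun y => D y i) x) * C x i)) = 0 := by
    intro j _
    have := pd_dot_zero C D hC hD h j x
    calc (∑ i : Fin 3, ((B x j * pd j (fun y => C y i) x) * D x i
        + (B x j * pd j (fun y => D y i) x) * C x i))
        = B x j * ∑ i, (pd j (fun y => C y i) x * D x i
          + C x i * pd j (fun y => D y i) x) := by
          rw [Finset.mul_sum]; apply Finset.sum_congr rfl; intro i _; ring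
      _ = 0 := by rw [this, mul_zero]
  exact Finset.sum_eq_zero this

theorem delta_alternate_expression
    (Ω u v : (Fin 3 → ℝ) → Fin 3 → ℝ)
    (hΩ : ContDiff ℝ (⊤ : ℕ∞) Ω) (hu : ContDiff ℝ (⊤ : ℕ∞) u) (hv : ContDiff ℝ (⊤ : ℕ∞) v)
    (horth : ∀ x, ∑ i, Ω x i * u x i = 0)
    (hΩunit : ∀ x, ∑ i, (Ω x i) ^ 2 = 1)
    (huunit : ∀ x, ∑ i, (u x i) ^ 2 = 1)
    (hvdef : ∀ x, v x = crossVec (Ω x) (u x)) :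
    ∀ x,
      (∑ i, dirDeriv Ω u x i * v x i) + (∑ i, dirDeriv u v x i * Ω x i)
        + (∑ i, dirDeriv v Ω x i * u x i)
      = -((∑ i, dirDeriv u Ω x i * v x i) + (∑ i, dirDeriv v u x i * Ω x i)
          + (∑ i, dirDeriv Ω v x i * u x i)) := by
  intro x
  have huv : ∀ y, ∑ i, u y i * v y i = 0 := by
    intro y
    simp [hvdef y, crossVec, Fin.sum_univ_three]
    ring
  have hvΩ : ∀ y, ∑ i, v y i * Ω y i = 0 := by
    intro y
    simp [hvdef y, crossVec, Fin.sum_univ_three]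
    ring
  have h1 := pair_zero Ω u v hu hv huv x
  have h2 := pair_zero u v Ω hv hΩ hvΩ x
  have h3 := pair_zero v Ω u hΩ hu horth x
  linarith
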